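/- arXiv:1805.05432 — 4 statements merged into one kernel-verified Lean document; each statement's English description precedes it below -/
import Mathlib

section
/- Let G1, G2 ∈ ℝ^{n×n} be symmetric positive definite matrices, and set R1 = chol(G1), R2 = chol(G2), R3 = chol(G1 + G2). Then for every i = 1, 2, …, n, λ_i(R3) ≥ max{ √(λ_i(R1)² + λ_1(R2)²), √(λ_i(R2)² + λ_1(R1)²) }. -/
/-!
The Gram identity `R₃ᵀR₃ = R₁ᵀR₁ + R₂ᵀR₂` says `‖R₃x‖² = ‖R₁x‖² + ‖R₂x‖²` for every `x`.
If `R₃x₁, …, R₃xᵢ` are linearly independent of length at most `r`, then the vectors `R₁xⱼ`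
are linearly independent too (as `R₁` is injective), and every `R₂xⱼ` is a nonzero lattice vector, hence of
length at least `λ₁(R₂)`. Thus `‖R₁xⱼ‖² ≤ r² - λ₁(R₂)²` for all `j`, so
`λᵢ(R₁)² + λ₁(R₂)² ≤ r²`; exchanging `G₁` and `G₂` gives the other term of the maximum.
-/

open Matrix

noncomputable section

/-- Euclidean norm of a real vector. -/
def euclNorm {m : ℕ} (x : Fin m → ℝ) : ℝ := Real.sqrt (∑ k, x k ^ 2)

/-- The lattice vector `A z` for an integer vector `z`. -/
def latticeVec {m n : ℕ} (A : Matrix (Fin m) (Fin n) ℝ) (z : Fin n → ℤ) : Fin m → ℝ :=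
  A.mulVec fun k => (z k : ℝ)

/-- The `i`-th successive minimum of the lattice generated by `A`: the smallest `r ≥ 0` such
that the closed ball of radius `r` centered at the origin contains `i` linearly independent
lattice vectors. -/
def succMin {m n : ℕ} (A : Matrix (Fin m) (Fin n) ℝ) (i : ℕ) : ℝ :=
  sInf {r : ℝ | 0 ≤ r ∧ ∃ v : Fin i → (Fin n → ℤ),
    LinearIndependent ℝ (fun j => latticeVec A (v j)) ∧
    ∀ j, euclNorm (latticeVec A (v j)) ≤ r}

/-- `R` is the Cholesky factor of `G`: `R` is upper triangular with positive diagonal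
entries and `Rᵀ * R = G`. -/
def IsCholesky {n : ℕ} (G R : Matrix (Fin n) (Fin n) ℝ) : Prop :=
  R.BlockTriangular id ∧ (∀ j, 0 < R j j) ∧ Rᵀ * R = G

lemma euclNorm_nonneg {m : ℕ} (x : Fin m → ℝ) : 0 ≤ euclNorm x := Real.sqrt_nonneg _

lemma sq_euclNorm {m : ℕ} (x : Fin m → ℝ) : euclNorm x ^ 2 = ∑ k, x k ^ 2 :=
  Real.sq_sqrt (Finset.sum_nonneg fun _ _ => sq_nonneg _)

lemma euclNorm_eq_zero {m : ℕ} {x : Fin m → ℝ} : euclNorm x = 0 ↔ x = 0 := by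
  rw [← sq_eq_zero_iff, sq_euclNorm,
    Finset.sum_eq_zero_iff_of_nonneg fun k _ => sq_nonneg (x k), funext_iff]
  simp

lemma sq_euclNorm_mulVec {m n : ℕ} (A : Matrix (Fin m) (Fin n) ℝ) (x : Fin n → ℝ) :
    euclNorm (A *ᵥ x) ^ 2 = x ⬝ᵥ (Aᵀ * A) *ᵥ x := by
  rw [sq_euclNorm, ← mulVec_mulVec, dotProduct_mulVec, vecMul_transpose]
  simp [dotProduct, sq]

lemma Function.Injective.mulVec_of_sq_euclNorm_le {m n k : ℕ} {A : Matrix (Fin m) (Fin n) ℝ}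
    {C : Matrix (Fin k) (Fin n) ℝ} (hA : Function.Injective A.mulVec)
    (hAC : ∀ x, euclNorm (A *ᵥ x) ^ 2 ≤ euclNorm (C *ᵥ x) ^ 2) : Function.Injective C.mulVec := by
  refine (injective_iff_map_eq_zero C.mulVecLin).mpr fun x hx => hA ?_
  have hAx := hAC x
  rw [mulVecLin_apply] at hx
  rw [hx, euclNorm_eq_zero.mpr rfl, zero_pow two_ne_zero] at hAx
  rw [mulVec_zero, ← euclNorm_eq_zero]
  exact pow_eq_zero_iff two_ne_zero |>.mp (le_antisymm hAx (sq_nonneg _))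

namespace IsCholesky

variable {n : ℕ} {G R : Matrix (Fin n) (Fin n) ℝ}

lemma injective_mulVec (h : IsCholesky G R) : Function.Injective R.mulVec := by
  rw [mulVec_injective_iff_isUnit, isUnit_iff_isUnit_det, det_of_isUpperTriangular h.1]
  exact (Finset.prod_pos fun j _ => h.2.1 j).ne'.isUnit

lemma sq_euclNorm_mulVec (h : IsCholesky G R) (x : Fin n → ℝ) :
    euclNorm (R *ᵥ x) ^ 2 = x ⬝ᵥ G *ᵥ x := by
  rw [_root_.sq_euclNorm_mulVec, h.2.2]

lemma sq_euclNorm_mulVec_add {G₁ G₂ R₁ R₂ R₃ : Matrix (Fin n) (Fin n) ℝ}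
    (h₁ : IsCholesky G₁ R₁) (h₂ : IsCholesky G₂ R₂) (h₃ : IsCholesky (G₁ + G₂) R₃)
    (x : Fin n → ℝ) :
    euclNorm (R₃ *ᵥ x) ^ 2 = euclNorm (R₁ *ᵥ x) ^ 2 + euclNorm (R₂ *ᵥ x) ^ 2 := by
  rw [h₁.sq_euclNorm_mulVec, h₂.sq_euclNorm_mulVec, h₃.sq_euclNorm_mulVec, add_mulVec,
    dotProduct_add]

end IsCholesky

section SuccMin

variable {m n : ℕ}

lemma succMin_nonneg (A : Matrix (Fin m) (Fin n) ℝ) (i : ℕ) : 0 ≤ succMin A i :=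
  Real.sInf_nonneg fun _ hr => hr.1

lemma succMin_le (A : Matrix (Fin m) (Fin n) ℝ) {i : ℕ} {r : ℝ} (hr : 0 ≤ r)
    (v : Fin i → Fin n → ℤ) (hv : LinearIndependent ℝ fun j => latticeVec A (v j))
    (hvr : ∀ j, euclNorm (latticeVec A (v j)) ≤ r) : succMin A i ≤ r :=
  csInf_le ⟨0, fun _ hx => hx.1⟩ ⟨hr, v, hv, hvr⟩

lemma succMin_one_le (A : Matrix (Fin m) (Fin n) ℝ) (z : Fin n → ℤ)
    (hz : latticeVec A z ≠ 0) : succMin A 1 ≤ euclNorm (latticeVec A z) :=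
  succMin_le A (euclNorm_nonneg _) (fun _ => z) (linearIndependent_unique_iff.mpr hz)
    fun _ => le_rfl

lemma exists_linearIndependent_latticeVec {A : Matrix (Fin m) (Fin n) ℝ}
    (hA : Function.Injective A.mulVec) {i : ℕ} (hin : i ≤ n) :
    ∃ v : Fin i → Fin n → ℤ, LinearIndependent ℝ fun j => latticeVec A (v j) := by
  refine ⟨fun j => Pi.single (Fin.castLE hin j) 1, ?_⟩
  have hcol : ∀ j, latticeVec A (Pi.single (Fin.castLE hin j) 1) = A.col (Fin.castLE hin j) := by
    intro j
    rw [← mulVec_single_one, latticeVec]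
    congr 1
    ext k
    simp [Pi.single_apply]
  simp only [hcol]
  exact (mulVec_injective_iff.mp hA).comp _ (Fin.castLE_injective hin)

lemma le_succMin {A : Matrix (Fin m) (Fin n) ℝ} (hA : Function.Injective A.mulVec) {i : ℕ}
    (hin : i ≤ n) {b : ℝ}
    (hb : ∀ v : Fin i → Fin n → ℤ, (LinearIndependent ℝ fun j => latticeVec A (v j)) →
      ∀ r, (∀ j, euclNorm (latticeVec A (v j)) ≤ r) → b ≤ r) :
    b ≤ succMin A i := by
  obtain ⟨v, hv⟩ := exists_linearIndependent_latticeVec hA hin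
  refine le_csInf ⟨∑ j, euclNorm (latticeVec A (v j)), ?_⟩ ?_
  · exact ⟨Finset.sum_nonneg fun j _ => euclNorm_nonneg _, v, hv,
      fun j => Finset.single_le_sum (f := fun j => euclNorm (latticeVec A (v j)))
        (fun j _ => euclNorm_nonneg _) (Finset.mem_univ j)⟩
  · rintro r ⟨-, w, hw, hwr⟩
    exact hb w hw r hwr

theorem sqrt_sq_succMin_add_sq_succMin_one_le {m₁ m₂ m₃ : ℕ}
    {A : Matrix (Fin m₁) (Fin n) ℝ} {B : Matrix (Fin m₂) (Fin n) ℝ} {C : Matrix (Fin m₃) (Fin n) ℝ}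
    (hA : Function.Injective A.mulVec) (hB : Function.Injective B.mulVec)
    (hABC : ∀ x, euclNorm (C *ᵥ x) ^ 2 = euclNorm (A *ᵥ x) ^ 2 + euclNorm (B *ᵥ x) ^ 2)
    {i : ℕ} (hi : 1 ≤ i) (hin : i ≤ n) :
    √(succMin A i ^ 2 + succMin B 1 ^ 2) ≤ succMin C i := by
  have hC : Function.Injective C.mulVec :=
    hA.mulVec_of_sq_euclNorm_le fun x => by rw [hABC x]; linarith [sq_nonneg (euclNorm (B *ᵥ x))]
  refine le_succMin hC hin fun v hv r hvr => ?_
  have hx : LinearIndependent ℝ fun j k => (v j k : ℝ) := hv.of_comp C.mulVecLin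
  have hAv : LinearIndependent ℝ fun j => latticeVec A (v j) :=
    hx.map' A.mulVecLin (LinearMap.ker_eq_bot.mpr hA)
  have hAr : ∀ j, euclNorm (latticeVec A (v j)) ^ 2 ≤ r ^ 2 - succMin B 1 ^ 2 := by
    intro j
    have hBj : latticeVec B (v j) ≠ 0 := by
      simpa only [latticeVec, mulVec_zero] using hB.ne (hx.ne_zero j)
    have hBmin := succMin_one_le B (v j) hBj
    have hCr := pow_le_pow_left₀ (euclNorm_nonneg _) (hvr j) 2
    have hBmin' := pow_le_pow_left₀ (succMin_nonneg B 1) hBmin 2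
    have hsplit : euclNorm (latticeVec C (v j)) ^ 2 =
        euclNorm (latticeVec A (v j)) ^ 2 + euclNorm (latticeVec B (v j)) ^ 2 := hABC _
    linarith
  have hr : 0 ≤ r := (euclNorm_nonneg _).trans (hvr ⟨0, hi⟩)
  have hs : 0 ≤ r ^ 2 - succMin B 1 ^ 2 := (sq_nonneg _).trans (hAr ⟨0, hi⟩)
  have hAi : succMin A i ≤ √(r ^ 2 - succMin B 1 ^ 2) :=
    succMin_le A (Real.sqrt_nonneg _) v hAv fun j => Real.le_sqrt_of_sq_le (hAr j)
  rw [Real.sqrt_le_left hr]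
  linarith [(Real.le_sqrt (succMin_nonneg A i) hs).mp hAi]

end SuccMin

theorem statement0_general {n : ℕ} (G1 G2 R1 R2 R3 : Matrix (Fin n) (Fin n) ℝ)
    (hR1 : IsCholesky G1 R1) (hR2 : IsCholesky G2 R2) (hR3 : IsCholesky (G1 + G2) R3) :
    ∀ i : ℕ, 1 ≤ i → i ≤ n →
      succMin R3 i ≥
        max (Real.sqrt (succMin R1 i ^ 2 + succMin R2 1 ^ 2))
            (Real.sqrt (succMin R2 i ^ 2 + succMin R1 1 ^ 2)) := by
  intro i hi hin
  have hR3' : IsCholesky (G2 + G1) R3 := add_comm G1 G2 ▸ hR3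
  exact max_le
    (sqrt_sq_succMin_add_sq_succMin_one_le hR1.injective_mulVec hR2.injective_mulVec
      (IsCholesky.sq_euclNorm_mulVec_add hR1 hR2 hR3) hi hin)
    (sqrt_sq_succMin_add_sq_succMin_one_le hR2.injective_mulVec hR1.injective_mulVec
      (IsCholesky.sq_euclNorm_mulVec_add hR2 hR1 hR3') hi hin)

theorem statement0 {n : ℕ} (G1 G2 R1 R2 R3 : Matrix (Fin n) (Fin n) ℝ)
    (hG1 : G1.PosDef) (hG2 : G2.PosDef)
    (hR1 : IsCholesky G1 R1) (hR2 : IsCholesky G2 R2) (hR3 : IsCholesky (G1 + G2) R3) :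
    ∀ i : ℕ, 1 ≤ i → i ≤ n →
      succMin R3 i ≥
        max (Real.sqrt (succMin R1 i ^ 2 + succMin R2 1 ^ 2))
            (Real.sqrt (succMin R2 i ^ 2 + succMin R1 1 ^ 2)) :=
  statement0_general G1 G2 R1 R2 R3 hR1 hR2 hR3
end
end

section
/- Let 0 < α_1 ≤ α_2 ≤ ⋯ ≤ α_n and β > α_n. Let G1 = diag(α_1, …, α_n) and G2 = β·I − G1, and define R̂1 = chol(G1⁻¹), R̂2 = chol(G2⁻¹), R̂3 = chol((G1 + G2)⁻¹), R̂4 = chol(G1⁻¹(G1⁻¹ + G2⁻¹)⁻¹G1⁻¹), R̂5 = chol(G2⁻¹(G1⁻¹ + G2⁻¹)⁻¹G2⁻¹). Then for every i = 1, …, n: λ_i(R̂1) = 1/√(α_{n−i+1}), λ_i(R̂2) = 1/√(β − α_i), λ_i(R̂3) = 1/√β, λ_i(R̂4) = √(1/α_{n−i+1} − 1/β), λ_i(R̂5) = √(1/(β − α_i) − 1/β); in particular, for every i the bounds λ_i(R̂1) ≥ max{√(λ_i(R̂3)² + λ_1(R̂4)²), √(λ_i(R̂4)² + λ_1(R̂3)²)}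 and λ_i(R̂2) ≥ max{√(λ_i(R̂3)² + λ_1(R̂5)²), √(λ_i(R̂5)² + λ_1(R̂3)²)} hold with equality. -/
open Matrix

noncomputable section

lemma abs_entry_le_euclNorm {m : ℕ} (x : Fin m → ℝ) (k : Fin m) : |x k| ≤ euclNorm x := by
  rw [euclNorm, ← Real.sqrt_sq_eq_abs]
  exact Real.sqrt_le_sqrt (Finset.single_le_sum (f := fun j => x j ^ 2)
    (fun j _ => sq_nonneg _) (Finset.mem_univ k))

lemma latticeVec_diagonal {n : ℕ} (d : Fin n → ℝ) (z : Fin n → ℤ) :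
    latticeVec (Matrix.diagonal d) z = fun k => d k * (z k : ℝ) := by
  funext k
  simp [latticeVec, Matrix.mulVec_diagonal]

lemma isCholesky_diagonal {n : ℕ} {g : Fin n → ℝ} {R : Matrix (Fin n) (Fin n) ℝ}
    (h : IsCholesky (Matrix.diagonal g) R) :
    R = Matrix.diagonal (fun j => Real.sqrt (g j)) := by
  obtain ⟨htri, hpos, hG⟩ := h
  have hupper : ∀ p q : Fin n, q < p → R p q = 0 := fun p q h => htri h
  have hzero : ∀ m : ℕ, ∀ p q : Fin n, (p : ℕ) = m → p < q → R p q = 0 := by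
    intro m
    induction m using Nat.strong_induction_on with
    | _ m ih =>
      intro p q hpm hpq
      have h0 : (Rᵀ * R) p q = 0 := by
        rw [hG]; exact Matrix.diagonal_apply_ne g (ne_of_lt hpq)
      have hsum : (Rᵀ * R) p q = ∑ k, R k p * R k q := by
        simp [Matrix.mul_apply, Matrix.transpose_apply]
      have hsingle : ∑ k, R k p * R k q = R p p * R p q := by
        apply Finset.sum_eq_single p
        · intro k _ hk
          rcases lt_or_gt_of_ne hk with hlt | hgt
          · rw [ih (k : ℕ) (by omega) k q rfl (lt_trans hlt hpq), mul_zero]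
          · rw [hupper k p hgt, zero_mul]
        · intro h; exact absurd (Finset.mem_univ p) h
      have : R p p * R p q = 0 := by rw [← hsingle, ← hsum]; exact h0
      exact (mul_eq_zero.1 this).resolve_left (hpos p).ne'
  have hoff : ∀ p q : Fin n, p ≠ q → R p q = 0 := by
    intro p q hpq
    rcases lt_or_gt_of_ne hpq with hlt | hgt
    · exact hzero (p : ℕ) p q rfl hlt
    · exact hupper p q hgt
  have hdiagsq : ∀ q : Fin n, R q q ^ 2 = g q := by
    intro q
    have h0 : (Rᵀ * R) q q = g q := by rw [hG]; exact Matrix.diagonal_apply_eq g q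
    have hsum : (Rᵀ * R) q q = ∑ k, R k q * R k q := by
      simp [Matrix.mul_apply, Matrix.transpose_apply]
    have hsingle : ∑ k, R k q * R k q = R q q * R q q := by
      apply Finset.sum_eq_single q
      · intro k _ hk; rw [hoff k q hk, zero_mul]
      · intro h; exact absurd (Finset.mem_univ q) h
    rw [sq, ← hsingle, ← hsum, h0]
  ext p q
  by_cases hpq : p = q
  · subst hpq
    rw [Matrix.diagonal_apply_eq, ← hdiagsq p, Real.sqrt_sq (hpos p).le]
  · rw [Matrix.diagonal_apply_ne _ hpq]
    exact hoff p q hpq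
lemma succMin_diagonal {n : ℕ} (d : Fin n → ℝ) (hd : ∀ j, 0 < d j)
    (e : Equiv.Perm (Fin n)) (hmono : Monotone fun j => d (e j)) (i : Fin n) :
    succMin (Matrix.diagonal d) ((i : ℕ) + 1) = d (e i) := by
  classical
  have hle : (i : ℕ) + 1 ≤ n := i.isLt
  apply IsLeast.csInf_eq
  constructor
  · refine ⟨(hd _).le, fun j k => if k = e (Fin.castLE hle j) then 1 else 0, ?_, ?_⟩
    · have hw : (fun j : Fin ((i : ℕ) + 1) => latticeVec (Matrix.diagonal d)
          (fun k => if k = e (Fin.castLE hle j) then 1 else 0))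
          = fun j => (Units.mk0 (d (e (Fin.castLE hle j))) (hd _).ne' : ℝˣ) •
            Pi.basisFun ℝ (Fin n) (e (Fin.castLE hle j)) := by
        funext j
        funext k
        rw [latticeVec_diagonal]
        by_cases hk : k = e (Fin.castLE hle j) <;>
          simp [hk, Pi.basisFun_apply, Pi.single_apply]
      rw [hw]
      exact ((Pi.basisFun ℝ (Fin n)).linearIndependent.comp _
        (e.injective.comp (Fin.castLE_injective hle))).units_smul _
    · intro j
      have hw : latticeVec (Matrix.diagonal d)
          (fun k => if k = e (Fin.castLE hle j) then 1 else 0)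
          = fun k => if k = e (Fin.castLE hle j) then d (e (Fin.castLE hle j)) else 0 := by
        funext k
        rw [latticeVec_diagonal]
        by_cases hk : k = e (Fin.castLE hle j) <;> simp [hk]
      rw [hw]
      have : euclNorm (fun k => if k = e (Fin.castLE hle j)
          then d (e (Fin.castLE hle j)) else 0) = d (e (Fin.castLE hle j)) := by
        rw [euclNorm]
        rw [Finset.sum_eq_single (e (Fin.castLE hle j))]
        · simp [Real.sqrt_sq (hd _).le]
        · intro k _ hk; simp [hk]
        · intro h; exact absurd (Finset.mem_univ _) h
      rw [this]
      exact hmono (show Fin.castLE hle j ≤ i from Fin.mk_le_mk.mpr (Nat.lt_succ_iff.mp j.isLt))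
  · rintro r ⟨hr0, v, hli, hnorm⟩
    by_contra hlt
    push_neg at hlt
    have hzero : ∀ j k, d (e i) ≤ d k → latticeVec (Matrix.diagonal d) (v j) k = 0 := by
      intro j k hk
      have h1 : |latticeVec (Matrix.diagonal d) (v j) k| ≤ r :=
        le_trans (abs_entry_le_euclNorm _ _) (hnorm j)
      rw [latticeVec_diagonal] at h1 ⊢
      by_contra hne
      have hz : v j k ≠ 0 := by
        intro h; apply hne; simp [h]
      have h2 : (1 : ℝ) ≤ |(v j k : ℝ)| := by
        rw [← Int.cast_abs]
        exact_mod_cast Int.one_le_abs hz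
      have h3 : d k ≤ |d k * (v j k : ℝ)| := by
        rw [abs_mul, abs_of_pos (hd k)]
        nlinarith [hd k]
      have := lt_of_le_of_lt h1 hlt
      linarith
    set S := {k : Fin n // d k < d (e i)} with hS
    set L : (Fin n → ℝ) →ₗ[ℝ] (S → ℝ) := LinearMap.funLeft ℝ ℝ Subtype.val with hL
    have hdisj : Disjoint (Submodule.span ℝ
        (Set.range fun j => latticeVec (Matrix.diagonal d) (v j))) (LinearMap.ker L) := by
      have hspan : ∀ x ∈ Submodule.span ℝ
          (Set.range fun j => latticeVec (Matrix.diagonal d) (v j)),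
          ∀ k, d (e i) ≤ d k → x k = 0 := by
        intro x hx
        induction hx using Submodule.span_induction with
        | mem y hy =>
          obtain ⟨j, rfl⟩ := hy
          exact hzero j
        | zero => intro k _; rfl
        | add y z _ _ hy hz => intro k hk; simp [hy k hk, hz k hk]
        | smul c y _ hy => intro k hk; simp [hy k hk]
      rw [Submodule.disjoint_def]
      intro x hx hker
      funext k
      by_cases hk : d k < d (e i)
      · have := congrFun (LinearMap.mem_ker.mp hker) ⟨k, hk⟩
        simpa [hL, LinearMap.funLeft_apply] using this
      · exact hspan x hx k (not_lt.1 hk)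
    have hli2 := hli.map hdisj
    have hcard := hli2.fintype_card_le_finrank
    rw [Module.finrank_fintype_fun_eq_card, Fintype.card_fin] at hcard
    have hp : ∀ s : S, ((e.symm s.1 : Fin n) : ℕ) < (i : ℕ) := by
      intro s
      by_contra hge
      have h1 : (i : Fin n) ≤ e.symm s.1 := by
        rw [Fin.le_def]; omega
      exact absurd s.2 (not_lt.2 (by simpa using hmono h1))
    have hinj : Function.Injective (fun s : S => (⟨(e.symm s.1 : ℕ), hp s⟩ : Fin (i : ℕ))) := by
      intro s t hst
      simp only [Fin.mk.injEq] at hst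
      exact Subtype.ext (e.symm.injective (Fin.ext hst))
    have := Fintype.card_le_of_injective _ hinj
    rw [Fintype.card_fin] at this
    omega
lemma diag_inv {n : ℕ} {v : Fin n → ℝ} (hv : ∀ j, v j ≠ 0) :
    (Matrix.diagonal v)⁻¹ = Matrix.diagonal (fun j => (v j)⁻¹) := by
  apply Matrix.inv_eq_right_inv
  rw [Matrix.diagonal_mul_diagonal]
  have h : (fun j => v j * (v j)⁻¹) = fun _ => (1 : ℝ) := funext fun j => mul_inv_cancel₀ (hv j)
  rw [h]
  exact Matrix.diagonal_one

lemma inv_anti' {a c : ℝ} (ha : 0 < a) (hac : a ≤ c) : c⁻¹ ≤ a⁻¹ := by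
  have := one_div_le_one_div_of_le ha hac
  simpa [one_div] using this

lemma inv_anti_lt' {a c : ℝ} (ha : 0 < a) (hac : a < c) : c⁻¹ < a⁻¹ := by
  have := one_div_lt_one_div_of_lt ha hac
  simpa [one_div] using this

lemma smul_one_sub_diag {n : ℕ} (α : Fin n → ℝ) (β : ℝ) :
    β • (1 : Matrix (Fin n) (Fin n) ℝ) - Matrix.diagonal α
      = Matrix.diagonal (fun j => β - α j) := by
  ext p q
  by_cases h : p = q
  · subst h
    simp [Matrix.sub_apply, Matrix.smul_apply, Matrix.one_apply_eq]
  · simp [Matrix.sub_apply, Matrix.smul_apply, Matrix.one_apply_ne h,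
      Matrix.diagonal_apply_ne _ h]

theorem statement4 {n : ℕ} (α : Fin n → ℝ) (β : ℝ)
    (hα : ∀ i, 0 < α i) (hmono : Monotone α) (hβ : ∀ i, α i < β)
    (Rh1 Rh2 Rh3 Rh4 Rh5 : Matrix (Fin n) (Fin n) ℝ)
    (hRh1 : IsCholesky (Matrix.diagonal α)⁻¹ Rh1)
    (hRh2 : IsCholesky (β • (1 : Matrix (Fin n) (Fin n) ℝ) - Matrix.diagonal α)⁻¹ Rh2)
    (hRh3 : IsCholesky (Matrix.diagonal α +
      (β • (1 : Matrix (Fin n) (Fin n) ℝ) - Matrix.diagonal α))⁻¹ Rh3)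
    (hRh4 : IsCholesky ((Matrix.diagonal α)⁻¹ *
      ((Matrix.diagonal α)⁻¹ + (β • (1 : Matrix (Fin n) (Fin n) ℝ) - Matrix.diagonal α)⁻¹)⁻¹ *
      (Matrix.diagonal α)⁻¹) Rh4)
    (hRh5 : IsCholesky ((β • (1 : Matrix (Fin n) (Fin n) ℝ) - Matrix.diagonal α)⁻¹ *
      ((Matrix.diagonal α)⁻¹ + (β • (1 : Matrix (Fin n) (Fin n) ℝ) - Matrix.diagonal α)⁻¹)⁻¹ *
      (β • (1 : Matrix (Fin n) (Fin n) ℝ) - Matrix.diagonal α)⁻¹) Rh5) :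
    ∀ i : Fin n,
      succMin Rh1 ((i : ℕ) + 1) = 1 / Real.sqrt (α i.rev) ∧
      succMin Rh2 ((i : ℕ) + 1) = 1 / Real.sqrt (β - α i) ∧
      succMin Rh3 ((i : ℕ) + 1) = 1 / Real.sqrt β ∧
      succMin Rh4 ((i : ℕ) + 1) = Real.sqrt (1 / α i.rev - 1 / β) ∧
      succMin Rh5 ((i : ℕ) + 1) = Real.sqrt (1 / (β - α i) - 1 / β) ∧
      succMin Rh1 ((i : ℕ) + 1)
        = max (Real.sqrt (succMin Rh3 ((i : ℕ) + 1) ^ 2 + succMin Rh4 1 ^ 2))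
              (Real.sqrt (succMin Rh4 ((i : ℕ) + 1) ^ 2 + succMin Rh3 1 ^ 2)) ∧
      succMin Rh2 ((i : ℕ) + 1)
        = max (Real.sqrt (succMin Rh3 ((i : ℕ) + 1) ^ 2 + succMin Rh5 1 ^ 2))
              (Real.sqrt (succMin Rh5 ((i : ℕ) + 1) ^ 2 + succMin Rh3 1 ^ 2)) := by
  intro i
  have hn : 0 < n := i.pos
  have hb : ∀ j, 0 < β - α j := fun j => sub_pos.mpr (hβ j)
  have hβ0 : 0 < β := (hα i).trans (hβ i)
  -- rewrite the five matrices as explicit diagonal matrices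
  have hsm := smul_one_sub_diag α β
  have hsumpos : ∀ j, 0 < (α j)⁻¹ + (β - α j)⁻¹ :=
    fun j => add_pos (inv_pos.mpr (hα j)) (inv_pos.mpr (hb j))
  have h1 : (Matrix.diagonal α)⁻¹ = Matrix.diagonal (fun j => (α j)⁻¹) :=
    diag_inv (fun j => (hα j).ne')
  have h2 : (β • (1 : Matrix (Fin n) (Fin n) ℝ) - Matrix.diagonal α)⁻¹
      = Matrix.diagonal (fun j => (β - α j)⁻¹) := by
    rw [hsm]; exact diag_inv (fun j => (hb j).ne')
  have h3 : (Matrix.diagonal α + (β • (1 : Matrix (Fin n) (Fin n) ℝ) - Matrix.diagonal α))⁻¹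
      = Matrix.diagonal (fun _ => β⁻¹) := by
    rw [hsm, Matrix.diagonal_add,
      diag_inv (v := fun j => α j + (β - α j)) (fun j => by
        show α j + (β - α j) ≠ 0
        rw [show α j + (β - α j) = β by ring]; exact hβ0.ne')]
    exact congrArg _ (funext fun j => by rw [show α j + (β - α j) = β by ring])
  have h4 : (Matrix.diagonal α)⁻¹ *
      ((Matrix.diagonal α)⁻¹ + (β • (1 : Matrix (Fin n) (Fin n) ℝ) - Matrix.diagonal α)⁻¹)⁻¹ *
      (Matrix.diagonal α)⁻¹ = Matrix.diagonal (fun j => (α j)⁻¹ - β⁻¹) := by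
    rw [h1, h2, Matrix.diagonal_add, diag_inv (fun j => (hsumpos j).ne'),
      Matrix.diagonal_mul_diagonal, Matrix.diagonal_mul_diagonal]
    refine congrArg _ (funext fun j => ?_)
    have ha := (hα j).ne'
    have hbj := (hb j).ne'
    have hs := (hsumpos j).ne'
    field_simp
    first
    | (left; ring)
    | ring
    field_simp [hβ0.ne']
  have h5 : (β • (1 : Matrix (Fin n) (Fin n) ℝ) - Matrix.diagonal α)⁻¹ *
      ((Matrix.diagonal α)⁻¹ + (β • (1 : Matrix (Fin n) (Fin n) ℝ) - Matrix.diagonal α)⁻¹)⁻¹ *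
      (β • (1 : Matrix (Fin n) (Fin n) ℝ) - Matrix.diagonal α)⁻¹
      = Matrix.diagonal (fun j => (β - α j)⁻¹ - β⁻¹) := by
    rw [h1, h2, Matrix.diagonal_add, diag_inv (fun j => (hsumpos j).ne'),
      Matrix.diagonal_mul_diagonal, Matrix.diagonal_mul_diagonal]
    refine congrArg _ (funext fun j => ?_)
    have ha := (hα j).ne'
    have hbj := (hb j).ne'
    have hs := (hsumpos j).ne'
    field_simp
    first
    | (left; ring)
    | ring
    field_simp [hβ0.ne']
  rw [h1] at hRh1; rw [h2] at hRh2; rw [h3] at hRh3; rw [h4] at hRh4; rw [h5] at hRh5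
  have e1 := isCholesky_diagonal hRh1
  have e2 := isCholesky_diagonal hRh2
  have e3 := isCholesky_diagonal hRh3
  have e4 := isCholesky_diagonal hRh4
  have e5 := isCholesky_diagonal hRh5
  -- positivity of diagonal entries of the Cholesky factors
  have hg4 : ∀ j, 0 < (α j)⁻¹ - β⁻¹ := fun j => sub_pos.mpr (inv_anti_lt' (hα j) (hβ j))
  have hg5 : ∀ j, 0 < (β - α j)⁻¹ - β⁻¹ := fun j =>
    sub_pos.mpr (inv_anti_lt' (hb j) (by linarith [hα j]))
  -- successive minima of the five lattices
  have s1 : ∀ k : Fin n, succMin Rh1 ((k : ℕ) + 1) = Real.sqrt ((α k.rev)⁻¹) := by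
    intro k
    rw [e1]
    have := succMin_diagonal (fun j => Real.sqrt ((α j)⁻¹))
      (fun j => Real.sqrt_pos.mpr (inv_pos.mpr (hα j))) Fin.revPerm
      (fun p q hpq => Real.sqrt_le_sqrt (inv_anti' (hα _)
        (hmono (Fin.rev_le_rev.mpr hpq)))) k
    simpa using this
  have s2 : ∀ k : Fin n, succMin Rh2 ((k : ℕ) + 1) = Real.sqrt ((β - α k)⁻¹) := by
    intro k
    rw [e2]
    exact succMin_diagonal (fun j => Real.sqrt ((β - α j)⁻¹))
      (fun j => Real.sqrt_pos.mpr (inv_pos.mpr (hb j))) (Equiv.refl _)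
      (fun p q hpq => Real.sqrt_le_sqrt (inv_anti' (hb _)
        (by have := hmono hpq; simp only [Equiv.refl_apply]; linarith))) k
  have s3 : ∀ k : Fin n, succMin Rh3 ((k : ℕ) + 1) = Real.sqrt (β⁻¹) := by
    intro k
    rw [e3]
    exact succMin_diagonal (fun _ => Real.sqrt (β⁻¹))
      (fun j => Real.sqrt_pos.mpr (inv_pos.mpr hβ0)) (Equiv.refl _) monotone_const k
  have s4 : ∀ k : Fin n, succMin Rh4 ((k : ℕ) + 1) = Real.sqrt ((α k.rev)⁻¹ - β⁻¹) := by
    intro k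
    rw [e4]
    have := succMin_diagonal (fun j => Real.sqrt ((α j)⁻¹ - β⁻¹))
      (fun j => Real.sqrt_pos.mpr (hg4 j)) Fin.revPerm
      (fun p q hpq => Real.sqrt_le_sqrt (by
        have : α (q.rev) ≤ α (p.rev) := hmono (Fin.rev_le_rev.mpr hpq)
        have := inv_anti' (hα _) this
        simp only [Fin.revPerm_apply]
        linarith)) k
    simpa using this
  have s5 : ∀ k : Fin n, succMin Rh5 ((k : ℕ) + 1) = Real.sqrt ((β - α k)⁻¹ - β⁻¹) := by
    intro k
    rw [e5]
    exact succMin_diagonal (fun j => Real.sqrt ((β - α j)⁻¹ - β⁻¹))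
      (fun j => Real.sqrt_pos.mpr (hg5 j)) (Equiv.refl _)
      (fun p q hpq => Real.sqrt_le_sqrt (by
        have h := hmono hpq
        have := inv_anti' (hb _) (show β - α q ≤ β - α p by simpa using by linarith)
        simp only [Equiv.refl_apply]
        linarith)) k
  set i0 : Fin n := ⟨0, hn⟩ with hi0
  have s3one : succMin Rh3 1 = Real.sqrt (β⁻¹) := s3 i0
  have s4one : succMin Rh4 1 = Real.sqrt ((α i0.rev)⁻¹ - β⁻¹) := s4 i0
  have s5one : succMin Rh5 1 = Real.sqrt ((β - α i0)⁻¹ - β⁻¹) := s5 i0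
  refine ⟨?_, ?_, ?_, ?_, ?_, ?_, ?_⟩
  · rw [s1 i, Real.sqrt_inv, one_div]
  · rw [s2 i, Real.sqrt_inv, one_div]
  · rw [s3 i, Real.sqrt_inv, one_div]
  · rw [s4 i, one_div, one_div]
  · rw [s5 i, one_div, one_div]
  · rw [s1 i, s3 i, s4 i, s3one, s4one,
      Real.sq_sqrt (inv_pos.mpr hβ0).le, Real.sq_sqrt (hg4 i0.rev).le,
      Real.sq_sqrt (hg4 i.rev).le,
      show β⁻¹ + ((α i0.rev)⁻¹ - β⁻¹) = (α i0.rev)⁻¹ by ring,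
      show (α i.rev)⁻¹ - β⁻¹ + β⁻¹ = (α i.rev)⁻¹ by ring]
    have hrev : i.rev ≤ i0.rev := Fin.rev_le_rev.mpr (by
      rw [Fin.le_def]; exact Nat.zero_le _)
    exact (max_eq_right (Real.sqrt_le_sqrt (inv_anti' (hα _) (hmono hrev)))).symm
  · rw [s2 i, s3 i, s5 i, s3one, s5one,
      Real.sq_sqrt (inv_pos.mpr hβ0).le, Real.sq_sqrt (hg5 i0).le,
      Real.sq_sqrt (hg5 i).le,
      show β⁻¹ + ((β - α i0)⁻¹ - β⁻¹) = (β - α i0)⁻¹ by ring,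
      show (β - α i)⁻¹ - β⁻¹ + β⁻¹ = (β - α i)⁻¹ by ring]
    have h0i : α i0 ≤ α i := hmono (by rw [Fin.le_def]; exact Nat.zero_le _)
    exact (max_eq_right (Real.sqrt_le_sqrt (inv_anti' (hb _) (by linarith)))).symm
end
end

section
/- Let G1 = diag(3, 1) and G2 = diag(1, 8) in ℝ^{2×2}, and set R1 = chol(G1), R2 = chol(G2), R3 = chol(G1 + G2). Then λ_2(R1) = √3, λ_2(R2) = √8, λ_2(R3) = 3, and hence λ_2(R3) < √(λ_2(R1)² + λ_2(R2)²). In particular, the inequality λ_i(chol(G1+G2)) ≥ √(λ_i(chol(G1))² + λ_i(chol(G2))²) does not hold in general for i > 1. -/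
open Matrix

noncomputable section

lemma chol_diag {a b : ℝ} (ha : 0 < a) (hb : 0 < b) {R : Matrix (Fin 2) (Fin 2) ℝ}
    (h : IsCholesky (Matrix.diagonal ![a, b]) R) :
    R = Matrix.diagonal ![Real.sqrt a, Real.sqrt b] := by
  obtain ⟨htri, hpos, heq⟩ := h
  have h10 : R 1 0 = 0 := htri (by decide : (id (0 : Fin 2)) < id 1)
  have e00 := congrFun (congrFun heq 0) 0
  have e01 := congrFun (congrFun heq 0) 1
  have e11 := congrFun (congrFun heq 1) 1
  simp only [Matrix.mul_apply, Fin.sum_univ_two, Matrix.transpose_apply, h10,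
    Matrix.diagonal_apply, Matrix.cons_val_zero, Matrix.cons_val_one, Matrix.head_cons,
    zero_mul, mul_zero, add_zero, zero_add, if_true] at e00 e01 e11
  have h01 : R 0 1 = 0 := by
    rcases mul_eq_zero.mp e01 with h | h
    · exact absurd h (hpos 0).ne'
    · exact h
  have hR00 : R 0 0 = Real.sqrt a := by
    have h2 : R 0 0 ^ 2 = a := by rw [sq]; exact e00
    rw [← h2, Real.sqrt_sq (hpos 0).le]
  have hR11 : R 1 1 = Real.sqrt b := by
    have h2 : R 1 1 ^ 2 = b := by rw [sq]; rw [h01] at e11; linarith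
    rw [← h2, Real.sqrt_sq (hpos 1).le]
  ext i j
  fin_cases i <;> fin_cases j <;>
    simp [Matrix.diagonal_apply, hR00, hR11, h01, h10]

lemma latticeVec_diag (a b : ℝ) (z : Fin 2 → ℤ) :
    latticeVec (Matrix.diagonal ![a, b]) z = ![a * (z 0 : ℝ), b * (z 1 : ℝ)] := by
  funext k
  fin_cases k <;> simp [latticeVec, Matrix.mulVec_diagonal]

lemma euclNorm_pair (x y : ℝ) : euclNorm ![x, y] = Real.sqrt (x ^ 2 + y ^ 2) := by
  simp [euclNorm, Fin.sum_univ_two]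

lemma succMin_diag {a b : ℝ} (ha : 0 < a) (hb : 0 < b) :
    succMin (Matrix.diagonal ![a, b]) 2 = max a b := by
  have hnorm : ∀ z : Fin 2 → ℤ, euclNorm (latticeVec (Matrix.diagonal ![a, b]) z)
      = Real.sqrt ((a * z 0) ^ 2 + (b * z 1) ^ 2) := by
    intro z; rw [latticeVec_diag, euclNorm_pair]
  have hw0 : latticeVec (Matrix.diagonal ![a, b]) ![1, 0] = ![a, 0] := by
    rw [latticeVec_diag]; norm_num
  have hw1 : latticeVec (Matrix.diagonal ![a, b]) ![0, 1] = ![0, b] := by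
    rw [latticeVec_diag]; norm_num
  have hmem : (max a b) ∈ {r : ℝ | 0 ≤ r ∧ ∃ v : Fin 2 → (Fin 2 → ℤ),
      LinearIndependent ℝ (fun j => latticeVec (Matrix.diagonal ![a, b]) (v j)) ∧
      ∀ j, euclNorm (latticeVec (Matrix.diagonal ![a, b]) (v j)) ≤ r} := by
    refine ⟨le_trans ha.le (le_max_left _ _), ![![1, 0], ![0, 1]], ?_, ?_⟩
    · rw [Fintype.linearIndependent_iff]
      intro g hg j
      have h0 := congrFun hg 0
      have h1 := congrFun hg 1
      simp only [Fin.sum_univ_two, Matrix.cons_val_zero, Matrix.cons_val_one, Matrix.head_cons,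
        hw0, hw1, Pi.add_apply, Pi.smul_apply, smul_eq_mul, Pi.zero_apply,
        mul_zero, add_zero, zero_add] at h0 h1
      have hg0 : g 0 = 0 := by
        rcases mul_eq_zero.mp h0 with h | h
        · exact h
        · exact absurd h ha.ne'
      have hg1 : g 1 = 0 := by
        rcases mul_eq_zero.mp h1 with h | h
        · exact h
        · exact absurd h hb.ne'
      fin_cases j <;> assumption
    · intro j
      fin_cases j
      · show euclNorm (latticeVec (Matrix.diagonal ![a, b]) ![1, 0]) ≤ max a b
        rw [hw0, euclNorm_pair]
        have : a ^ 2 + (0:ℝ) ^ 2 = a ^ 2 := by ring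
        rw [this, Real.sqrt_sq ha.le]
        exact le_max_left _ _
      · show euclNorm (latticeVec (Matrix.diagonal ![a, b]) ![0, 1]) ≤ max a b
        rw [hw1, euclNorm_pair]
        have : (0:ℝ) ^ 2 + b ^ 2 = b ^ 2 := by ring
        rw [this, Real.sqrt_sq hb.le]
        exact le_max_right _ _
  refine le_antisymm (csInf_le ⟨0, fun r hr => hr.1⟩ hmem) (le_csInf ⟨_, hmem⟩ ?_)
  rintro r ⟨hr0, v, hli, hbd⟩
  -- helper: norm lower bounds
  have key : ∀ (z : Fin 2 → ℤ), z 1 ≠ 0 →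
      b ≤ euclNorm (latticeVec (Matrix.diagonal ![a, b]) z) := by
    intro z hz
    rw [hnorm]
    have h1 : (1 : ℝ) ≤ ((z 1 : ℝ)) ^ 2 := by
      have := Int.one_le_abs hz
      calc (1:ℝ) = (1:ℝ)^2 := by ring
        _ ≤ |(z 1 : ℝ)| ^ 2 := by
            apply pow_le_pow_left₀ (by norm_num)
            rw [← Int.cast_abs]; exact_mod_cast this
        _ = (z 1 : ℝ) ^ 2 := sq_abs _
    have : b ^ 2 ≤ (a * z 0) ^ 2 + (b * z 1) ^ 2 := by
      have : b ^ 2 ≤ (b * z 1) ^ 2 := by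
        rw [mul_pow]; nlinarith [sq_nonneg (b : ℝ)]
      nlinarith [sq_nonneg (a * (z 0 : ℝ))]
    calc b = Real.sqrt (b ^ 2) := (Real.sqrt_sq hb.le).symm
      _ ≤ _ := Real.sqrt_le_sqrt this
  have key0 : ∀ (z : Fin 2 → ℤ), z 0 ≠ 0 →
      a ≤ euclNorm (latticeVec (Matrix.diagonal ![a, b]) z) := by
    intro z hz
    rw [hnorm]
    have h1 : (1 : ℝ) ≤ ((z 0 : ℝ)) ^ 2 := by
      have := Int.one_le_abs hz
      calc (1:ℝ) = (1:ℝ)^2 := by ring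
        _ ≤ |(z 0 : ℝ)| ^ 2 := by
            apply pow_le_pow_left₀ (by norm_num)
            rw [← Int.cast_abs]; exact_mod_cast this
        _ = (z 0: ℝ) ^ 2 := sq_abs _
    have : a ^ 2 ≤ (a * z 0) ^ 2 + (b * z 1) ^ 2 := by
      have : a ^ 2 ≤ (a * z 0) ^ 2 := by
        rw [mul_pow]; nlinarith [sq_nonneg (a : ℝ)]
      nlinarith [sq_nonneg (b * (z 1 : ℝ))]
    calc a = Real.sqrt (a ^ 2) := (Real.sqrt_sq ha.le).symm
      _ ≤ _ := Real.sqrt_le_sqrt this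
  -- existence of a vector with nonzero coordinate 1
  have hli' := Fintype.linearIndependent_iff.mp hli
  have ex1 : ∃ j, (v j) 1 ≠ 0 := by
    by_contra hc
    push_neg at hc
    have hsum : ∑ i, (![(v 1 0 : ℝ), -(v 0 0 : ℝ)]) i •
        latticeVec (Matrix.diagonal ![a, b]) (v i) = 0 := by
      funext k
      fin_cases k <;>
        simp [Fin.sum_univ_two, latticeVec_diag, hc 0, hc 1] <;> ring
    have := hli' _ hsum
    have h10 : (v 1 0 : ℝ) = 0 := by simpa using this 0
    have h00 : (v 0 0 : ℝ) = 0 := by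
      have := this 1
      simp at this
      exact_mod_cast congrArg Int.cast this
    have : latticeVec (Matrix.diagonal ![a, b]) (v 0) = 0 := by
      rw [latticeVec_diag]
      funext k
      fin_cases k <;> simp [h00, hc 0]
    exact hli.ne_zero 0 this
  have ex0 : ∃ j, (v j) 0 ≠ 0 := by
    by_contra hc
    push_neg at hc
    have hsum : ∑ i, (![(v 1 1 : ℝ), -(v 0 1 : ℝ)]) i •
        latticeVec (Matrix.diagonal ![a, b]) (v i) = 0 := by
      funext k
      fin_cases k <;>
        simp [Fin.sum_univ_two, latticeVec_diag, hc 0, hc 1] <;> ring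
    have := hli' _ hsum
    have h01 : (v 0 1 : ℝ) = 0 := by
      have := this 1
      simp at this
      exact_mod_cast congrArg Int.cast this
    have : latticeVec (Matrix.diagonal ![a, b]) (v 0) = 0 := by
      rw [latticeVec_diag]
      funext k
      fin_cases k <;> simp [h01, hc 0]
    exact hli.ne_zero 0 this
  obtain ⟨j1, hj1⟩ := ex1
  obtain ⟨j0, hj0⟩ := ex0
  exact max_le (le_trans (key0 _ hj0) (hbd j0)) (le_trans (key _ hj1) (hbd j1))

lemma sqrt4 : Real.sqrt 4 = 2 := by
  rw [show (4:ℝ) = 2 ^ 2 by norm_num, Real.sqrt_sq (by norm_num)]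

lemma sqrt9 : Real.sqrt 9 = 3 := by
  rw [show (9:ℝ) = 3 ^ 2 by norm_num, Real.sqrt_sq (by norm_num)]

theorem statement11 (R1 R2 R3 : Matrix (Fin 2) (Fin 2) ℝ)
    (hR1 : IsCholesky (Matrix.diagonal ![(3 : ℝ), 1]) R1)
    (hR2 : IsCholesky (Matrix.diagonal ![(1 : ℝ), 8]) R2)
    (hR3 : IsCholesky (Matrix.diagonal ![(3 : ℝ), 1] + Matrix.diagonal ![(1 : ℝ), 8]) R3) :
    succMin R1 2 = Real.sqrt 3 ∧
    succMin R2 2 = Real.sqrt 8 ∧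
    succMin R3 2 = 3 ∧
    succMin R3 2 < Real.sqrt (succMin R1 2 ^ 2 + succMin R2 2 ^ 2) := by
  have hsum : Matrix.diagonal ![(3:ℝ), 1] + Matrix.diagonal ![(1:ℝ), 8]
      = Matrix.diagonal ![(4:ℝ), 9] := by
    ext i j
    fin_cases i <;> fin_cases j <;>
      norm_num [Matrix.add_apply, Matrix.diagonal_apply]
  rw [hsum] at hR3
  have e1 := chol_diag (by norm_num) (by norm_num) hR1
  have e2 := chol_diag (by norm_num) (by norm_num) hR2
  have e3 := chol_diag (by norm_num) (by norm_num) hR3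
  have sp3 : (0:ℝ) < Real.sqrt 3 := Real.sqrt_pos.mpr (by norm_num)
  have sp1 : (0:ℝ) < Real.sqrt 1 := Real.sqrt_pos.mpr (by norm_num)
  have sp8 : (0:ℝ) < Real.sqrt 8 := Real.sqrt_pos.mpr (by norm_num)
  have sp4 : (0:ℝ) < Real.sqrt 4 := Real.sqrt_pos.mpr (by norm_num)
  have sp9 : (0:ℝ) < Real.sqrt 9 := Real.sqrt_pos.mpr (by norm_num)
  have s1 : succMin R1 2 = Real.sqrt 3 := by
    rw [e1, succMin_diag sp3 sp1, max_eq_left (Real.sqrt_le_sqrt (by norm_num))]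
  have s2 : succMin R2 2 = Real.sqrt 8 := by
    rw [e2, succMin_diag sp1 sp8, max_eq_right (Real.sqrt_le_sqrt (by norm_num))]
  have s3 : succMin R3 2 = 3 := by
    rw [e3, succMin_diag sp4 sp9, max_eq_right (Real.sqrt_le_sqrt (by norm_num)), sqrt9]
  refine ⟨s1, s2, s3, ?_⟩
  rw [s1, s2, s3, Real.sq_sqrt (by norm_num : (3:ℝ) ≥ 0),
    Real.sq_sqrt (by norm_num : (8:ℝ) ≥ 0)]
  rw [show (3:ℝ) + 8 = 11 by norm_num, ← sqrt9]
  exact Real.sqrt_lt_sqrt (by norm_num) (by norm_num)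
end
end

section
/- Let P > 0, let A ∈ ℝ^{m×n} have full column rank, and let S ∈ ℝ^{m×m} be symmetric positive semidefinite. For d > 0 define F(d) = chol( (P⁻¹·I_n + Aᵀ(S + d·I_m)⁻¹A)⁻¹ ). Then for any 0 < d₁ < d₂ and every i = 1, …, n, λ_i(F(d₁)) < λ_i(F(d₂)); that is, each successive minimum λ_i(F(d)) is strictly increasing in d. -/
open Matrix

noncomputable section

/-!
Write `H(d) = P⁻¹ I + Aᵀ (S + d I)⁻¹ A`. As `d ↦ S + d I` is strictly increasing in the Loewner
order and inversion reverses that order, `H(d₁) - H(d₂) = Aᵀ ((S + d₁ I)⁻¹ - (S + d₂ I)⁻¹) A` is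
positive definite (`A` has full column rank), hence so is `G(d₂) - G(d₁)` for the Gram matrices
`G(d) = F(d)ᵀ F(d) = H(d)⁻¹`. Compactness of the unit sphere turns this strict inequality of
quadratic forms into a uniform constant `c > 1` with `c ‖F(d₁) x‖ ≤ ‖F(d₂) x‖` for all `x`, so
`c λᵢ(F(d₁)) ≤ λᵢ(F(d₂))`; since `λᵢ(F(d₂)) > 0` (the lattice is discrete), `λᵢ(F(d₁)) < λᵢ(F(d₂))`.
-/

open Function

section QuadraticForm

variable {ι : Type*} [Fintype ι]

lemma dotProduct_smul_mulVec_smul (M : Matrix ι ι ℝ) (t : ℝ) (x : ι → ℝ) :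
    (t • x) ⬝ᵥ M *ᵥ (t • x) = t ^ 2 * (x ⬝ᵥ M *ᵥ x) := by
  rw [mulVec_smul, smul_dotProduct, dotProduct_smul, smul_eq_mul, smul_eq_mul]
  ring

lemma Matrix.PosDef.inv_sub_inv [DecidableEq ι] {M₁ M₂ : Matrix ι ι ℝ} (h₁ : M₁.PosDef)
    (h₂ : M₂.PosDef) (h : (M₂ - M₁).PosDef) : (M₁⁻¹ - M₂⁻¹).PosDef := by
  set D := M₂ - M₁
  have hu₁ := (isUnit_iff_isUnit_det M₁).1 h₁.isUnit
  have hu₂ := (isUnit_iff_isUnit_det M₂).1 h₂.isUnit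
  -- `M₁⁻¹ - M₂⁻¹ = M₂⁻¹ D M₁⁻¹ = M₁⁻¹ D M₂⁻¹`; substituting the second form into the first
  -- writes it as a positive definite congruence of `D` plus a semidefinite one of `M₁⁻¹`.
  have e₂₁ : M₁⁻¹ - M₂⁻¹ = M₂⁻¹ * D * M₁⁻¹ := by
    rw [mul_sub, sub_mul, nonsing_inv_mul _ hu₂, one_mul, mul_assoc,
      mul_nonsing_inv _ hu₁, mul_one]
  have e₁₂ : M₁⁻¹ = M₂⁻¹ + M₁⁻¹ * D * M₂⁻¹ := by
    rw [mul_sub, sub_mul, nonsing_inv_mul _ hu₁, one_mul, mul_assoc,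
      mul_nonsing_inv _ hu₂, mul_one]
    abel
  have e : M₁⁻¹ - M₂⁻¹ = (M₂⁻¹)ᴴ * D * M₂⁻¹ + (D * M₂⁻¹)ᴴ * M₁⁻¹ * (D * M₂⁻¹) := by
    rw [conjTranspose_mul, h.1.eq, h₂.inv.1.eq, e₂₁]
    conv_lhs => rw [e₁₂]
    simp only [mul_add, Matrix.mul_assoc]
  rw [e]
  exact (h.conjTranspose_mul_mul_same (mulVec_injective_of_isUnit h₂.inv.isUnit)).add_posSemidef
    (h₁.inv.posSemidef.conjTranspose_mul_mul_same _)

lemma exists_one_lt_mul_dotProduct_mulVec_le {M₁ M₂ : Matrix ι ι ℝ} (h₁ : M₁.PosDef)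
    (h : (M₂ - M₁).PosDef) : ∃ c > 1, ∀ x, c * (x ⬝ᵥ M₁ *ᵥ x) ≤ x ⬝ᵥ M₂ *ᵥ x := by
  rcases isEmpty_or_nonempty ι with hι | hι
  · exact ⟨2, one_lt_two, fun x => by simp [Subsingleton.elim x 0]⟩
  have hpos : ∀ x ≠ 0, 0 < x ⬝ᵥ M₁ *ᵥ x := fun x hx => by
    simpa using h₁.dotProduct_mulVec_pos hx
  have hlt : ∀ x ≠ 0, x ⬝ᵥ M₁ *ᵥ x < x ⬝ᵥ M₂ *ᵥ x := fun x hx => by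
    simpa [sub_mulVec] using h.dotProduct_mulVec_pos hx
  -- `f` is scale invariant, so its minimum over the unit sphere is a global lower bound
  set f : (ι → ℝ) → ℝ := fun x => (x ⬝ᵥ M₂ *ᵥ x) / (x ⬝ᵥ M₁ *ᵥ x) with hf
  have hf_smul : ∀ x, ∀ t ≠ (0 : ℝ), f (t • x) = f x := fun x t ht => by
    simp only [hf, dotProduct_smul_mulVec_smul]
    exact mul_div_mul_left _ _ (pow_ne_zero 2 ht)
  have hcont : ContinuousOn f (Metric.sphere 0 1) :=
    ContinuousOn.div (by fun_prop) (by fun_prop) fun x hx =>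
      (hpos x (ne_zero_of_mem_unit_sphere ⟨x, hx⟩)).ne'
  obtain ⟨u, hu, hmin⟩ := (isCompact_sphere (0 : ι → ℝ) 1).exists_isMinOn
    (NormedSpace.sphere_nonempty.2 zero_le_one) hcont
  have hu₀ : u ≠ 0 := ne_zero_of_mem_unit_sphere ⟨u, hu⟩
  refine ⟨f u, (one_lt_div (hpos u hu₀)).2 (hlt u hu₀), fun x => ?_⟩
  rcases eq_or_ne x 0 with rfl | hx
  · simp
  have : f u ≤ f x := by
    rw [← hf_smul x ‖x‖⁻¹ (by positivity)]
    exact hmin (by simp [norm_smul, hx])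
  exact (le_div_iff₀ (hpos x hx)).1 this

end QuadraticForm

section Lattice

variable {m m' n : ℕ}

lemma euclNorm_mulVec (A : Matrix (Fin m) (Fin n) ℝ) (x : Fin n → ℝ) :
    euclNorm (A *ᵥ x) = √(x ⬝ᵥ (Aᵀ * A) *ᵥ x) := by
  rw [euclNorm, ← mulVec_mulVec, dotProduct_mulVec, vecMul_transpose]
  simp [dotProduct, sq]

lemma norm_le_euclNorm (y : Fin m → ℝ) : ‖y‖ ≤ euclNorm y :=
  (pi_norm_le_iff_of_nonneg (Real.sqrt_nonneg _)).2 fun k => by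
    rw [Real.norm_eq_abs]
    exact Real.abs_le_sqrt (Finset.single_le_sum (f := fun k => y k ^ 2)
      (fun _ _ => sq_nonneg _) (Finset.mem_univ k))

lemma one_le_norm_intCast {z : Fin n → ℤ} (hz : z ≠ 0) : 1 ≤ ‖fun k => (z k : ℝ)‖ := by
  obtain ⟨k, hk⟩ := Function.ne_iff.1 hz
  calc (1 : ℝ) ≤ |(z k : ℝ)| := by exact_mod_cast Int.one_le_abs hk
    _ ≤ ‖fun k => (z k : ℝ)‖ := norm_le_pi_norm (fun k => (z k : ℝ)) k

lemma exists_one_lt_mul_euclNorm_le {F₁ : Matrix (Fin m) (Fin n) ℝ}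
    {F₂ : Matrix (Fin m') (Fin n) ℝ} (h₁ : (F₁ᵀ * F₁).PosDef) (h : (F₂ᵀ * F₂ - F₁ᵀ * F₁).PosDef) :
    ∃ c > 1, ∀ x, c * euclNorm (F₁ *ᵥ x) ≤ euclNorm (F₂ *ᵥ x) := by
  obtain ⟨c, hc, hle⟩ := exists_one_lt_mul_dotProduct_mulVec_le h₁ h
  refine ⟨√c, (Real.lt_sqrt zero_le_one).2 (by simpa using hc), fun x => ?_⟩
  rw [euclNorm_mulVec, euclNorm_mulVec, ← Real.sqrt_mul (by linarith)]
  exact Real.sqrt_le_sqrt (hle x)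

lemma linearIndependent_mulVec_iff {κ : Type*} {A : Matrix (Fin m) (Fin n) ℝ}
    (hA : Injective A.mulVec) {v : κ → Fin n → ℝ} :
    LinearIndependent ℝ (fun j => A *ᵥ v j) ↔ LinearIndependent ℝ v :=
  A.mulVecLin.linearIndependent_iff (LinearMap.ker_eq_bot.2 hA)

lemma mulVec_injective_of_rank_eq {A : Matrix (Fin m) (Fin n) ℝ} (hA : A.rank = n) :
    Injective A.mulVec := by
  rw [mulVec_injective_iff, linearIndependent_iff_card_eq_finrank_span, Set.finrank,
    ← rank_eq_finrank_span_cols, hA, Fintype.card_fin]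

-- `succMin A i = sInf (succMinRadii A i)` holds by `rfl`.
def succMinRadii (A : Matrix (Fin m) (Fin n) ℝ) (i : ℕ) : Set ℝ :=
  {r : ℝ | 0 ≤ r ∧ ∃ v : Fin i → (Fin n → ℤ),
    LinearIndependent ℝ (fun j => latticeVec A (v j)) ∧
    ∀ j, euclNorm (latticeVec A (v j)) ≤ r}

lemma succMinRadii_nonempty {A : Matrix (Fin m) (Fin n) ℝ} (hA : Injective A.mulVec) {i : ℕ}
    (hin : i ≤ n) : (succMinRadii A i).Nonempty := by
  set v : Fin i → Fin n → ℤ := fun j => Pi.single (Fin.castLE hin j) 1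
  have hv : (fun j k => (v j k : ℝ)) = Pi.basisFun ℝ (Fin n) ∘ Fin.castLE hin := by
    ext j k
    simp [v, Pi.single_apply, apply_ite (fun t : ℤ => (t : ℝ))]
  have hind : LinearIndependent ℝ (fun j => latticeVec A (v j)) := by
    refine (linearIndependent_mulVec_iff hA).2 ?_
    rw [hv]
    exact (Pi.basisFun ℝ (Fin n)).linearIndependent.comp _ (Fin.castLE_injective hin)
  have hnonneg : ∀ j, 0 ≤ euclNorm (latticeVec A (v j)) := fun _ => Real.sqrt_nonneg _
  exact ⟨∑ j, euclNorm (latticeVec A (v j)), Finset.sum_nonneg fun j _ => hnonneg j, v, hind,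
    fun j => Finset.single_le_sum (fun j _ => hnonneg j) (Finset.mem_univ j)⟩

lemma succMin_pos {A : Matrix (Fin m) (Fin n) ℝ} (hA : Injective A.mulVec) {i : ℕ} (hi : 1 ≤ i)
    (hin : i ≤ n) : 0 < succMin A i := by
  obtain ⟨K, -, hK⟩ := A.mulVecLin.injective_iff_antilipschitz.1 hA
  obtain ⟨c, hc, hle⟩ := antilipschitzWith_iff_exists_mul_le_norm.1 ⟨K, hK⟩
  refine hc.trans_le (le_csInf (succMinRadii_nonempty hA hin) ?_)
  rintro r ⟨-, v, hv, hr⟩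
  let j₀ : Fin i := ⟨0, hi⟩
  have hz : v j₀ ≠ 0 := fun h => hv.ne_zero j₀ (by simp [latticeVec, h, ← Pi.zero_def])
  calc c ≤ c * ‖fun k => (v j₀ k : ℝ)‖ := le_mul_of_one_le_right hc.le (one_le_norm_intCast hz)
    _ ≤ ‖latticeVec A (v j₀)‖ := hle _
    _ ≤ euclNorm (latticeVec A (v j₀)) := norm_le_euclNorm _
    _ ≤ r := hr j₀

lemma mul_succMin_le_succMin {A : Matrix (Fin m) (Fin n) ℝ} {B : Matrix (Fin m') (Fin n) ℝ}
    (hA : Injective A.mulVec) (hB : Injective B.mulVec) {c : ℝ} (hc : 0 < c)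
    (hAB : ∀ x, c * euclNorm (A *ᵥ x) ≤ euclNorm (B *ᵥ x)) {i : ℕ} (hin : i ≤ n) :
    c * succMin A i ≤ succMin B i := by
  refine le_csInf (succMinRadii_nonempty hB hin) ?_
  rintro r ⟨hr, v, hv, hvr⟩
  rw [← le_div_iff₀' hc]
  refine csInf_le ⟨0, fun _ h => h.1⟩ ⟨div_nonneg hr hc.le, v, ?_, fun j => ?_⟩
  · exact (linearIndependent_mulVec_iff hA).2 ((linearIndependent_mulVec_iff hB).1 hv)
  · rw [le_div_iff₀' hc]
    exact (hAB _).trans (hvr j)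

lemma succMin_lt_succMin {A : Matrix (Fin m) (Fin n) ℝ} {B : Matrix (Fin m') (Fin n) ℝ}
    (hA : Injective A.mulVec) (hB : Injective B.mulVec) {c : ℝ} (hc : 1 < c)
    (hAB : ∀ x, c * euclNorm (A *ᵥ x) ≤ euclNorm (B *ᵥ x)) {i : ℕ} (hi : 1 ≤ i) (hin : i ≤ n) :
    succMin A i < succMin B i := by
  have hA₀ : 0 ≤ succMin A i := Real.sInf_nonneg fun _ hr => hr.1
  have hB₀ := succMin_pos hB hi hin
  have hAB := mul_succMin_le_succMin hA hB (zero_lt_one.trans hc) hAB hin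
  nlinarith

end Lattice

lemma IsCholesky.injective_mulVec_s13 {n : ℕ} {G R : Matrix (Fin n) (Fin n) ℝ}
    (h : IsCholesky G R) : Injective R.mulVec := by
  rw [mulVec_injective_iff_isUnit, isUnit_iff_isUnit_det, det_of_isUpperTriangular h.1]
  exact (Finset.prod_pos fun j _ => h.2.1 j).ne'.isUnit

lemma Matrix.PosSemidef.add_smul_one_posDef {κ : Type*} [DecidableEq κ] {S : Matrix κ κ ℝ}
    (hS : S.PosSemidef) {d : ℝ} (hd : 0 < d) : (S + d • 1).PosDef :=
  PosDef.posSemidef_add hS (PosDef.one.smul hd)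

section Precision

variable {κ ι : Type*} [Fintype κ] [DecidableEq κ] [Fintype ι] [DecidableEq ι]

def precision (P : ℝ) (A : Matrix κ ι ℝ) (S : Matrix κ κ ℝ) (d : ℝ) : Matrix ι ι ℝ :=
  P⁻¹ • 1 + Aᵀ * (S + d • 1)⁻¹ * A

lemma precision_posDef {P : ℝ} (hP : 0 < P) (A : Matrix κ ι ℝ) {S : Matrix κ κ ℝ}
    (hS : S.PosSemidef) {d : ℝ} (hd : 0 < d) : (precision P A S d).PosDef :=
  (PosDef.one.smul (inv_pos.2 hP)).add_posSemidef <| by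
    simpa using (hS.add_smul_one_posDef hd).inv.posSemidef.conjTranspose_mul_mul_same A

lemma precision_sub_precision_posDef (P : ℝ) {A : Matrix κ ι ℝ} (hA : Injective A.mulVec)
    {S : Matrix κ κ ℝ} (hS : S.PosSemidef) {d₁ d₂ : ℝ} (hd₁ : 0 < d₁) (hd₁₂ : d₁ < d₂) :
    (precision P A S d₁ - precision P A S d₂).PosDef := by
  have hN : ((S + d₂ • 1) - (S + d₁ • 1) : Matrix κ κ ℝ).PosDef := by
    rw [add_sub_add_left_eq_sub, ← sub_smul]
    exact PosDef.one.smul (sub_pos.2 hd₁₂)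
  have hinv := (hS.add_smul_one_posDef hd₁).inv_sub_inv
    (hS.add_smul_one_posDef (hd₁.trans hd₁₂)) hN
  have e : precision P A S d₁ - precision P A S d₂ =
      Aᴴ * ((S + d₁ • 1)⁻¹ - (S + d₂ • 1)⁻¹) * A := by
    rw [conjTranspose_eq_transpose_of_trivial, Matrix.mul_sub, Matrix.sub_mul]
    exact add_sub_add_left_eq_sub _ _ _
  rw [e]
  exact hinv.conjTranspose_mul_mul_same hA

end Precision

theorem statement13 {m n : ℕ} (P : ℝ) (hP : 0 < P)
    (A : Matrix (Fin m) (Fin n) ℝ) (hA : A.rank = n)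
    (S : Matrix (Fin m) (Fin m) ℝ) (hS : S.PosSemidef)
    (d1 d2 : ℝ) (hd1 : 0 < d1) (hd12 : d1 < d2)
    (F1 F2 : Matrix (Fin n) (Fin n) ℝ)
    (hF1 : IsCholesky
      ((P⁻¹ • (1 : Matrix (Fin n) (Fin n) ℝ) +
        Aᵀ * (S + d1 • (1 : Matrix (Fin m) (Fin m) ℝ))⁻¹ * A)⁻¹) F1)
    (hF2 : IsCholesky
      ((P⁻¹ • (1 : Matrix (Fin n) (Fin n) ℝ) +
        Aᵀ * (S + d2 • (1 : Matrix (Fin m) (Fin m) ℝ))⁻¹ * A)⁻¹) F2) :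
    ∀ i : ℕ, 1 ≤ i → i ≤ n → succMin F1 i < succMin F2 i := by
  intro i hi hin
  have hH₁ := precision_posDef hP A hS hd1
  have hH₂ := precision_posDef hP A hS (hd1.trans hd12)
  have hG₁ : (F1ᵀ * F1).PosDef := by
    rw [hF1.2.2]
    exact hH₁.inv
  have hG₁₂ : (F2ᵀ * F2 - F1ᵀ * F1).PosDef := by
    rw [hF1.2.2, hF2.2.2]
    exact hH₂.inv_sub_inv hH₁
      (precision_sub_precision_posDef P (mulVec_injective_of_rank_eq hA) hS hd1 hd12)
  obtain ⟨c, hc, hF₁₂⟩ := exists_one_lt_mul_euclNorm_le hG₁ hG₁₂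
  exact succMin_lt_succMin hF1.injective_mulVec_s13 hF2.injective_mulVec_s13 hc hF₁₂ hi hin
end
end
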